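/- arXiv:2605.15750 — 2 statements merged into one kernel-verified Lean document; each statement's English description precedes it below -/
import Mathlib

section
/- Let E be a nonempty finite set, p_CS > 0, and let r_i > 0 be real requests for i ∈ E, with utilities u_i(x) = min(x / r_i, 1). Let ω ≥ 0 and define p_i = min(ω, r_i) for each i ∈ E, and suppose ∑_{i∈E} p_i = min(p_CS, ∑_{i∈E} r_i). Then the allocation p is proportional: for every i ∈ E, u_i(p_i) ≥ u_i(p_CS) / |E|. -/
open Finset

/- Writing `min (x / r) 1 = min x r / r`, proportionality of EV `i` says
`min p_CS r_i ≤ |E| · min ω r_i`. If `r_i ≤ ω` this holds because `|E| ≥ 1`; otherwise EV `i`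
receives `ω`, every EV receives at most `ω`, and
`min p_CS r_i ≤ min p_CS (∑ r) = ∑ min ω r_j ≤ |E| · ω`. -/

lemma min_div_one_eq_min_div {x r : ℝ} (hr : 0 < r) : min (x / r) 1 = min x r / r := by
  rw [← min_div_div_right hr.le, div_self hr.ne']

lemma min_le_min_mul_card_of_sum_min_eq {ι : Type*} {E : Finset ι} {r : ι → ℝ}
    (hr : ∀ j ∈ E, 0 ≤ r j) {c ω : ℝ}
    (hsum : ∑ j ∈ E, min ω (r j) = min c (∑ j ∈ E, r j)) {i : ι} (hi : i ∈ E) :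
    min c (r i) ≤ min ω (r i) * #E := by
  have hcard : (1 : ℝ) ≤ #E := by exact_mod_cast card_pos.mpr ⟨i, hi⟩
  rcases le_total (r i) ω with hle | hlt
  · rw [min_eq_right hle]
    nlinarith [min_le_right c (r i), hr i hi]
  · rw [min_eq_left hlt]
    calc min c (r i) ≤ min c (∑ j ∈ E, r j) := min_le_min_left c (single_le_sum hr hi)
      _ = ∑ j ∈ E, min ω (r j) := hsum.symm
      _ ≤ ∑ _j ∈ E, ω := sum_le_sum fun j _ ↦ min_le_left ω (r j)
      _ = ω * #E := by rw [sum_const, nsmul_eq_mul, mul_comm]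

theorem waterfilling_proportional_general {ι : Type*} (E : Finset ι)
    (pCS : ℝ)
    (r : ι → ℝ) (hr : ∀ i ∈ E, 0 < r i)
    (u : ι → ℝ → ℝ) (hu : ∀ i, ∀ x : ℝ, u i x = min (x / r i) 1)
    (ω : ℝ)
    (p : ι → ℝ) (hp : ∀ i ∈ E, p i = min ω (r i))
    (hsum : ∑ i ∈ E, p i = min pCS (∑ i ∈ E, r i)) :
    ∀ i ∈ E, u i (p i) ≥ u i pCS / (E.card : ℝ) := by
  intro i hi
  have hri := hr i hi
  have hcard : (0 : ℝ) < #E := by exact_mod_cast card_pos.mpr ⟨i, hi⟩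
  rw [sum_congr rfl hp] at hsum
  rw [hu, hu, hp i hi, min_div_one_eq_min_div hri, min_div_one_eq_min_div hri,
    min_eq_left (min_le_right ω (r i)), ge_iff_le, div_le_iff₀ hcard, div_mul_eq_mul_div,
    div_le_div_iff_of_pos_right hri]
  exact min_le_min_mul_card_of_sum_min_eq (fun j hj ↦ (hr j hj).le) hsum hi

/-- The water-filling allocation exactly exhausting `min p_CS (∑ r i)`
is proportional. -/
theorem waterfilling_proportional {ι : Type*} (E : Finset ι) (hE : E.Nonempty)
    (pCS : ℝ) (hpCS : 0 < pCS)
    (r : ι → ℝ) (hr : ∀ i ∈ E, 0 < r i)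
    (u : ι → ℝ → ℝ) (hu : ∀ i, ∀ x : ℝ, u i x = min (x / r i) 1)
    (ω : ℝ) (hω : 0 ≤ ω)
    (p : ι → ℝ) (hp : ∀ i ∈ E, p i = min ω (r i))
    (hsum : ∑ i ∈ E, p i = min pCS (∑ i ∈ E, r i)) :
    ∀ i ∈ E, u i (p i) ≥ u i pCS / (E.card : ℝ) :=
  waterfilling_proportional_general E pCS r hr u hu ω p hp hsum
end

section
/- Let E be a finite set, let r_i > 0 be real module requests for i ∈ E, with utilities u_i(x) = min(x / r_i, 1) for x ≥ 0 and u_i(x) = 0 for x < 0, and let m : E → ℕ be an integer allocation. Suppose there exists a natural number T such that for every i ∈ E, either m_i = ⌈r_i⌉ and m_i ≤ T (EV i is fulfilled), or m_i < ⌈r_i⌉ and T − 1 ≤ m_i ≤ T (EV i is unfulfilled with near-maximal allocation). Then m is envy-free up to one module: u_i(m_i) ≥ u_i(m_j − 1) for all i, j ∈ E. -/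
/-!
A fulfilled EV has utility `1`, the maximum, so it envies nobody. An unfulfilled EV `i`
has `T - 1 ≤ m i`, while every EV `j` has `m j ≤ T`; hence `m j - 1 ≤ m i`, and the
claim follows because utilities are monotone.
-/

noncomputable def cappedUtility (r x : ℝ) : ℝ := if 0 ≤ x then min (x / r) 1 else 0

namespace cappedUtility

variable {r : ℝ}

theorem le_one (r x : ℝ) : cappedUtility r x ≤ 1 := by
  unfold cappedUtility
  split_ifs
  · exact min_le_right _ _
  · exact zero_le_one

theorem nonneg (hr : 0 ≤ r) (x : ℝ) : 0 ≤ cappedUtility r x := by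
  unfold cappedUtility
  split_ifs with hx
  · exact le_min (div_nonneg hx hr) zero_le_one
  · exact le_rfl

theorem monotone (hr : 0 ≤ r) : Monotone (cappedUtility r) := by
  intro x y hxy
  by_cases hx : 0 ≤ x
  · have hy : 0 ≤ y := hx.trans hxy
    simp only [cappedUtility, if_pos hx, if_pos hy]
    gcongr
  · simp only [cappedUtility, if_neg hx]
    exact nonneg hr y

theorem eq_one_of_le (hr : 0 < r) {x : ℝ} (hx : r ≤ x) : cappedUtility r x = 1 := by
  rw [cappedUtility, if_pos (hr.le.trans hx), min_eq_right ((one_le_div hr).2 hx)]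

end cappedUtility

/-- Any integer allocation with the round-robin structure of
Fair-Opap-M (fulfilled EVs get exactly `⌈r i⌉ ≤ T`; unfulfilled EVs get `T − 1`
or `T` modules) is envy-free up to one module. -/
theorem roundrobin_ef1 {ι : Type*} (E : Finset ι)
    (r : ι → ℝ) (hr : ∀ i ∈ E, 0 < r i)
    (u : ι → ℝ → ℝ)
    (hu : ∀ i, ∀ x : ℝ, u i x = if 0 ≤ x then min (x / r i) 1 else 0)
    (m : ι → ℕ) (T : ℕ)
    (hstruct : ∀ i ∈ E,
      (m i = ⌈r i⌉₊ ∧ m i ≤ T) ∨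
      (m i < ⌈r i⌉₊ ∧ T - 1 ≤ m i ∧ m i ≤ T)) :
    ∀ i ∈ E, ∀ j ∈ E, u i (m i : ℝ) ≥ u i ((m j : ℝ) - 1) := by
  intro i hi j hj
  have hui : u i = cappedUtility (r i) := funext (hu i)
  rw [hui]
  rcases hstruct i hi with ⟨hfulfilled, -⟩ | ⟨-, hTi, -⟩
  · have hri : r i ≤ m i := hfulfilled ▸ Nat.le_ceil (r i)
    rw [cappedUtility.eq_one_of_le (hr i hi) hri]
    exact cappedUtility.le_one _ _
  · have hjT : m j ≤ T := by rcases hstruct j hj with ⟨-, h⟩ | ⟨-, -, h⟩ <;> exact h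
    have hji : m j ≤ m i + 1 := by omega
    apply cappedUtility.monotone (hr i hi).le
    rw [sub_le_iff_le_add]
    exact_mod_cast hji
end
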